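/- arXiv:1408.4693 — 4 statements merged into one kernel-verified Lean document; each statement's English description precedes it below -/
import Mathlib

section
/- Let 𝔤 be a finite-dimensional real Lie algebra, θ a Lie algebra automorphism of 𝔤 with θ ∘ θ = id, and H ∈ 𝔤 with θ(H) = -H. Let 𝔫(H) denote the sum of the eigenspaces of ad H with strictly positive eigenvalues. If X ∈ 𝔫(H) satisfies X + θ(X) = 0, then X = 0. (The map X ↦ X + θX is a linear monomorphism from 𝔫(H) into the +1-eigenspace 𝔨 of θ.) -/
/-! Since `θ` is a Lie algebra morphism with `θ H = -H`, it maps the `μ`-eigenspace of `ad H` into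
the `-μ`-eigenspace. Hence for `X ∈ 𝔫(H)` the vector `θ X`, and so `X = -θ X`, lies in the sum of
the eigenspaces with negative eigenvalues; eigenspaces for distinct eigenvalues are independent,
so the positive and negative sums meet only in `0`. -/

open Module.End LieAlgebra

section

variable {R L : Type*} [CommRing R] [LieRing L] [LieAlgebra R L]

theorem LieHom.map_mem_eigenspace_ad {L' : Type*} [LieRing L'] [LieAlgebra R L']
    (φ : L →ₗ⁅R⁆ L') {x y : L} {μ : R} (hy : y ∈ eigenspace (ad R L x) μ) :
    φ y ∈ eigenspace (ad R L' (φ x)) μ := by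
  rw [mem_eigenspace_iff, ad_apply] at hy ⊢
  rw [← LieHom.map_lie, hy, map_smul]

theorem eigenspace_ad_neg (x : L) (μ : R) :
    eigenspace (ad R L (-x)) μ = eigenspace (ad R L x) (-μ) := by
  ext y
  simp only [mem_eigenspace_iff, ad_apply, neg_lie, neg_smul, neg_eq_iff_eq_neg]

theorem LieHom.map_mem_biSup_eigenspace_ad_of_map_eq_neg (θ : L →ₗ⁅R⁆ L) {H X : L}
    (hH : θ H = -H) {s t : Set R} (hst : ∀ μ ∈ s, -μ ∈ t)
    (hX : X ∈ ⨆ μ ∈ s, eigenspace (ad R L H) μ) :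
    θ X ∈ ⨆ μ ∈ t, eigenspace (ad R L H) μ := by
  suffices h : ⨆ μ ∈ s, eigenspace (ad R L H) μ ≤
      (⨆ μ ∈ t, eigenspace (ad R L H) μ).comap θ.toLinearMap from h hX
  refine iSup₂_le fun μ hμ y hy ↦ le_biSup (fun ν ↦ eigenspace (ad R L H) ν) (hst μ hμ) ?_
  have hθy := θ.map_mem_eigenspace_ad hy
  rwa [hH, eigenspace_ad_neg] at hθy

end

theorem eq_zero_of_mem_nH_add_theta_eq_zero_general
    {𝔤 : Type*} [LieRing 𝔤] [LieAlgebra ℝ 𝔤]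
    (θ : 𝔤 →ₗ⁅ℝ⁆ 𝔤)
    (H : 𝔤) (hH : θ H = -H) (X : 𝔤)
    (hX : X ∈ ⨆ lam > (0 : ℝ), Module.End.eigenspace (LieAlgebra.ad ℝ 𝔤 H) lam)
    (h : X + θ X = 0) :
    X = 0 := by
  have hθX : θ X ∈ ⨆ μ ∈ Set.Iio 0, eigenspace (ad ℝ 𝔤 H) μ :=
    θ.map_mem_biSup_eigenspace_ad_of_map_eq_neg hH (s := Set.Ioi 0)
      (fun _ hμ ↦ Set.mem_Iio.mpr (neg_neg_iff_pos.mpr hμ)) hX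
  have hX_neg : X ∈ ⨆ μ ∈ Set.Iio 0, eigenspace (ad ℝ 𝔤 H) μ := by
    rw [eq_neg_of_add_eq_zero_left h]
    exact neg_mem hθX
  have hdisj := (ad ℝ 𝔤 H).eigenspaces_iSupIndep.disjoint_biSup_biSup
    (Set.Ioi_disjoint_Iio_same (a := (0 : ℝ)))
  exact Submodule.disjoint_def.mp hdisj X hX hX_neg

/-- Let `θ` be an involutive Lie algebra automorphism with `θ H = -H` and let
`𝔫(H)` be the sum of the eigenspaces of `ad H` with positive eigenvalues.
If `X ∈ 𝔫(H)` and `X + θ X = 0` then `X = 0`: the map `X ↦ X + θX` is injective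
on `𝔫(H)`. -/
theorem eq_zero_of_mem_nH_add_theta_eq_zero
    {𝔤 : Type*} [LieRing 𝔤] [LieAlgebra ℝ 𝔤] [FiniteDimensional ℝ 𝔤]
    (θ : 𝔤 →ₗ⁅ℝ⁆ 𝔤) (hinv : ∀ Z : 𝔤, θ (θ Z) = Z)
    (H : 𝔤) (hH : θ H = -H) (X : 𝔤)
    (hX : X ∈ ⨆ lam > (0 : ℝ), Module.End.eigenspace (LieAlgebra.ad ℝ 𝔤 H) lam)
    (h : X + θ X = 0) :
    X = 0 :=
  eq_zero_of_mem_nH_add_theta_eq_zero_general θ H hH X hX h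
end

section
/- Let 𝔤 be a finite-dimensional real Lie algebra, θ a Lie algebra automorphism of 𝔤 with θ ∘ θ = id, and H ∈ 𝔤 with θ(H) = -H. Let 𝔫(H) denote the sum of the eigenspaces of ad H with strictly positive eigenvalues. If X ∈ 𝔫(H) satisfies ⁅H, X + θ(X)⁆ = 0, then X = 0. (The image of 𝔫(H) under X ↦ X + θX has trivial intersection with the centralizer 𝔷_𝔨(H).) -/
/-!
Put `Y = ⁅H, X⁆`. Since `θ` is a Lie algebra morphism with `θ H = -H`, it maps the
`λ`-eigenspace of `ad H` into the `-λ`-eigenspace, and the hypothesis says exactly `θ Y = Y`.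
Now `Y` lies in `𝔫(H)`, which is `ad H`-stable, and `θ Y` in the sum of the negative eigenspaces,
so `Y = 0` by independence of eigenspaces. Hence `X` is in the kernel of `ad H` as well as in
`𝔫(H)`, and independence again gives `X = 0`.
-/

open Module End

namespace Module.End

variable {R M : Type*} [CommRing R] [AddCommGroup M] [Module R M]

lemma eigenspace_neg (f : End R M) (μ : R) : eigenspace (-f) μ = eigenspace f (-μ) := by
  ext x
  simp only [mem_eigenspace_iff, LinearMap.neg_apply, neg_smul, neg_eq_iff_eq_neg]

lemma biSup_eigenspace_le_comap (f : End R M) (s : Set R) :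
    ⨆ μ ∈ s, eigenspace f μ ≤ (⨆ μ ∈ s, eigenspace f μ).comap f :=
  iSup₂_le fun μ hμ ↦
    (eigenspace_mem_invtSubmodule f μ).trans (Submodule.comap_mono (le_biSup _ hμ))

lemma eq_zero_of_mem_biSup_eigenspace_of_apply_mem [IsDomain R] [IsTorsionFree R M]
    {f : End R M} {s t : Set R} (hst : Disjoint s t) (hs : 0 ∉ s) {x : M}
    (hx : x ∈ ⨆ μ ∈ s, eigenspace f μ) (hfx : f x ∈ ⨆ μ ∈ t, eigenspace f μ) : x = 0 := by
  have hfx_zero : f x = 0 :=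
    Submodule.disjoint_def.mp ((eigenspaces_iSupIndep f).disjoint_biSup_biSup hst) _
      (biSup_eigenspace_le_comap f s hx) hfx
  have hx_ker : x ∈ eigenspace f 0 := by rwa [eigenspace_zero, LinearMap.mem_ker]
  exact Submodule.disjoint_def.mp ((eigenspaces_iSupIndep f).disjoint_biSup hs) x hx_ker hx

end Module.End

namespace LieHom

variable {R L L' : Type*} [CommRing R] [LieRing L] [LieAlgebra R L] [LieRing L'] [LieAlgebra R L']

lemma apply_mem_eigenspace_ad (θ : L →ₗ⁅R⁆ L') {H x : L} {μ : R}
    (hx : x ∈ eigenspace (LieAlgebra.ad R L H) μ) :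
    θ x ∈ eigenspace (LieAlgebra.ad R L' (θ H)) μ := by
  rw [mem_eigenspace_iff, LieAlgebra.ad_apply] at hx ⊢
  rw [← θ.map_lie, hx, map_smul]

lemma apply_mem_biSup_eigenspace_ad_neg (θ : L →ₗ⁅R⁆ L) {H : L} (hH : θ H = -H) {s : Set R}
    {x : L} (hx : x ∈ ⨆ μ ∈ s, eigenspace (LieAlgebra.ad R L H) μ) :
    θ x ∈ ⨆ μ ∈ -s, eigenspace (LieAlgebra.ad R L H) μ := by
  suffices hle : ⨆ μ ∈ s, eigenspace (LieAlgebra.ad R L H) μ ≤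
      (⨆ μ ∈ -s, eigenspace (LieAlgebra.ad R L H) μ).comap (θ : L →ₗ[R] L) from hle hx
  refine iSup₂_le fun μ hμ y hy ↦ ?_
  have hθy := θ.apply_mem_eigenspace_ad hy
  rw [hH, map_neg, eigenspace_neg] at hθy
  exact le_biSup (fun ν ↦ eigenspace (LieAlgebra.ad R L H) ν) (Set.neg_mem_neg.mpr hμ) hθy

end LieHom

theorem eq_zero_of_mem_nH_lie_add_theta_eq_zero_general
    {𝔤 : Type*} [LieRing 𝔤] [LieAlgebra ℝ 𝔤]
    (θ : 𝔤 →ₗ⁅ℝ⁆ 𝔤)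
    (H : 𝔤) (hH : θ H = -H) (X : 𝔤)
    (hX : X ∈ ⨆ lam > (0 : ℝ), Module.End.eigenspace (LieAlgebra.ad ℝ 𝔤 H) lam)
    (h : ⁅H, X + θ X⁆ = 0) :
    X = 0 := by
  have hθ_fixed : θ ⁅H, X⁆ = ⁅H, X⁆ := by
    rw [θ.map_lie, hH, neg_lie, neg_eq_iff_add_eq_zero, add_comm, ← lie_add, h]
  have hpos : ⁅H, X⁆ ∈ ⨆ μ ∈ Set.Ioi (0 : ℝ), eigenspace (LieAlgebra.ad ℝ 𝔤 H) μ :=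
    biSup_eigenspace_le_comap _ _ hX
  have hneg : ⁅H, X⁆ ∈ ⨆ μ ∈ -Set.Ioi (0 : ℝ), eigenspace (LieAlgebra.ad ℝ 𝔤 H) μ :=
    hθ_fixed ▸ θ.apply_mem_biSup_eigenspace_ad_neg hH hpos
  exact eq_zero_of_mem_biSup_eigenspace_of_apply_mem (s := Set.Ioi 0) (by simp) (lt_irrefl 0)
    hX hneg

/-- Let `θ` be an involutive Lie algebra automorphism with `θ H = -H` and let
`𝔫(H)` be the sum of the eigenspaces of `ad H` with positive eigenvalues.
If `X ∈ 𝔫(H)` and `⁅H, X + θ X⁆ = 0` then `X = 0`: the image of `𝔫(H)` under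
`X ↦ X + θX` meets the centralizer `𝔷_𝔨(H)` trivially. -/
theorem eq_zero_of_mem_nH_lie_add_theta_eq_zero
    {𝔤 : Type*} [LieRing 𝔤] [LieAlgebra ℝ 𝔤] [FiniteDimensional ℝ 𝔤]
    (θ : 𝔤 →ₗ⁅ℝ⁆ 𝔤) (hinv : ∀ Z : 𝔤, θ (θ Z) = Z)
    (H : 𝔤) (hH : θ H = -H) (X : 𝔤)
    (hX : X ∈ ⨆ lam > (0 : ℝ), Module.End.eigenspace (LieAlgebra.ad ℝ 𝔤 H) lam)
    (h : ⁅H, X + θ X⁆ = 0) :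
    X = 0 :=
  eq_zero_of_mem_nH_lie_add_theta_eq_zero_general θ H hH X hX h
end

section
/- Let 𝔤 be a finite-dimensional real Lie algebra with Killing form κ, and let θ be a Cartan involution of 𝔤, i.e., a Lie algebra automorphism with θ ∘ θ = id such that the bilinear form B(X,Y) = -κ(X, θ(Y)) is positive definite. Let H ∈ 𝔤 with θ(H) = -H, and let 𝔫(H) be the sum of the eigenspaces of ad H with strictly positive eigenvalues. Then for every nonzero X ∈ 𝔫(H) there exists Y ∈ 𝔤 with θ(Y) = Y and κ(X,Y) ≠ 0. (The Killing-form pairing between 𝔫(H) and 𝔨 is nondegenerate in the first variable.) -/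
/-!
For an invariant form, `(λ + μ) κ(A, B) = κ(⁅H, A⁆, B) + κ(A, ⁅H, B⁆) = 0` when `A`, `B` are
`ad H`-eigenvectors with eigenvalues `λ`, `μ`; as positive eigenvalues never sum to zero, `𝔫(H)` is
totally isotropic for the Killing form. Hence for `X ∈ 𝔫(H)` the `θ`-fixed vector `Y = X + θ X`
gives `κ(X, Y) = κ(X, θ X) < 0`.
-/

namespace LinearMap.BilinForm.lieInvariant

open Module.End LieAlgebra

variable {K L : Type*} [Field K] [LieRing L] [LieAlgebra K L] {Φ : LinearMap.BilinForm K L}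

lemma apply_eq_zero_of_mem_eigenspace (hΦ : Φ.lieInvariant L) {H A B : L} {lam mu : K}
    (hsum : lam + mu ≠ 0) (hA : A ∈ eigenspace (ad K L H) lam)
    (hB : B ∈ eigenspace (ad K L H) mu) : Φ A B = 0 := by
  rw [mem_eigenspace_iff, ad_apply] at hA hB
  have h := hΦ H A B
  rw [hA, hB, map_smul, LinearMap.smul_apply, map_smul, smul_eq_mul, smul_eq_mul] at h
  have hprod : (lam + mu) * Φ A B = 0 := by linear_combination h
  exact (mul_eq_zero.mp hprod).resolve_left hsum

lemma apply_eq_zero_of_mem_iSup_eigenspace_pos [LinearOrder K] [IsStrictOrderedRing K]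
    (hΦ : Φ.lieInvariant L) {H A B : L}
    (hA : A ∈ ⨆ lam > (0 : K), eigenspace (ad K L H) lam)
    (hB : B ∈ ⨆ lam > (0 : K), eigenspace (ad K L H) lam) : Φ A B = 0 := by
  have hiso : (⨆ lam > (0 : K), eigenspace (ad K L H) lam) ≤
      Φ.orthogonal (⨆ lam > (0 : K), eigenspace (ad K L H) lam) := by
    refine iSup₂_le fun mu hmu B hB => ?_
    have hker : (⨆ lam > (0 : K), eigenspace (ad K L H) lam) ≤ LinearMap.ker (Φ.flip B) :=
      iSup₂_le fun lam hlam A hA =>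
        hΦ.apply_eq_zero_of_mem_eigenspace (add_pos hlam hmu).ne' hA hB
    exact fun A hA => hker hA
  exact hiso hB A hA

end LinearMap.BilinForm.lieInvariant

theorem exists_fixed_killing_pairing_ne_zero_general
    {𝔤 : Type*} [LieRing 𝔤] [LieAlgebra ℝ 𝔤] [FiniteDimensional ℝ 𝔤]
    (θ : 𝔤 →ₗ⁅ℝ⁆ 𝔤) (hinv : ∀ Z : 𝔤, θ (θ Z) = Z)
    (hpos : ∀ X : 𝔤, X ≠ 0 → 0 < -(killingForm ℝ 𝔤 X (θ X)))
    (H : 𝔤) (X : 𝔤)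
    (hX : X ∈ ⨆ lam > (0 : ℝ), Module.End.eigenspace (LieAlgebra.ad ℝ 𝔤 H) lam)
    (hX0 : X ≠ 0) :
    ∃ Y : 𝔤, θ Y = Y ∧ killingForm ℝ 𝔤 X Y ≠ 0 := by
  have hXX : killingForm ℝ 𝔤 X X = 0 :=
    (LieModule.traceForm_lieInvariant ℝ 𝔤 𝔤).apply_eq_zero_of_mem_iSup_eigenspace_pos hX hX
  refine ⟨X + θ X, by rw [map_add, hinv, add_comm], ?_⟩
  rw [map_add, hXX, zero_add]
  exact fun h => (hpos X hX0).ne' (by rw [h, neg_zero])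

/-- Let `θ` be a Cartan involution (an involutive Lie algebra automorphism such
that `B(X,Y) = -κ(X, θ Y)` is positive definite), let `θ H = -H`, and let `𝔫(H)`
be the sum of the eigenspaces of `ad H` with positive eigenvalues. Then every
nonzero `X ∈ 𝔫(H)` pairs nontrivially under the Killing form with some
`θ`-fixed vector `Y`. -/
theorem exists_fixed_killing_pairing_ne_zero
    {𝔤 : Type*} [LieRing 𝔤] [LieAlgebra ℝ 𝔤] [FiniteDimensional ℝ 𝔤]
    (θ : 𝔤 →ₗ⁅ℝ⁆ 𝔤) (hinv : ∀ Z : 𝔤, θ (θ Z) = Z)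
    (hpos : ∀ X : 𝔤, X ≠ 0 → 0 < -(killingForm ℝ 𝔤 X (θ X)))
    (H : 𝔤) (hH : θ H = -H) (X : 𝔤)
    (hX : X ∈ ⨆ lam > (0 : ℝ), Module.End.eigenspace (LieAlgebra.ad ℝ 𝔤 H) lam)
    (hX0 : X ≠ 0) :
    ∃ Y : 𝔤, θ Y = Y ∧ killingForm ℝ 𝔤 X Y ≠ 0 :=
  exists_fixed_killing_pairing_ne_zero_general θ hinv hpos H X hX hX0
end

section
/- Let 𝔤 be a finite-dimensional real Lie algebra whose Killing form κ is nondegenerate, let θ be a Lie algebra automorphism of 𝔤 with θ ∘ θ = id, and let H ∈ 𝔤 be real hyperbolic (the eigenspaces of ad H span 𝔤) with θ(H) = -H. Let 𝔫(H) be the sum of the eigenspaces of ad H with strictly positive eigenvalues. If Y ∈ 𝔤 satisfies θ(Y) = Y and κ(X,Y) = 0 for all X ∈ 𝔫(H), then ⁅H,Y⁆ = 0. (Hence the Killing-form pairing 𝔫(H) × 𝔨/𝔷_𝔨(H) → ℝ is nondegenerate in the second variable.) -/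
/-!
Since `ad H` is skew for the Killing form, `κ(Z, ⁅H, Y⁆) = -μ κ(Z, Y)` for an eigenvector `Z`
of `ad H` with eigenvalue `μ`, so it suffices that `Y` is orthogonal to every eigenspace with
`μ ≠ 0`. For `μ > 0` this is the hypothesis; for `μ < 0`, the automorphism `θ` preserves `κ`,
fixes `Y` and maps the `μ`-eigenspace into the `-μ`-eigenspace because `θ H = -H`.
Nondegeneracy of `κ` then forces `⁅H, Y⁆ = 0`.
-/

open Module.End LieAlgebra

namespace LieAlgebra

variable {R L : Type*} [CommRing R] [LieRing L] [LieAlgebra R L]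

lemma mem_eigenspace_ad_iff {H Z : L} {μ : R} :
    Z ∈ eigenspace (ad R L H) μ ↔ ⁅H, Z⁆ = μ • Z := by
  rw [mem_eigenspace_iff, ad_apply]

lemma mem_eigenspace_ad_neg_iff {H Z : L} {μ : R} :
    Z ∈ eigenspace (ad R L (-H)) μ ↔ Z ∈ eigenspace (ad R L H) (-μ) := by
  rw [mem_eigenspace_ad_iff, mem_eigenspace_ad_iff, neg_lie, neg_smul, neg_eq_iff_eq_neg]

lemma _root_.LieHom.map_mem_eigenspace_ad_s12 {L' : Type*} [LieRing L'] [LieAlgebra R L']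
    (φ : L →ₗ⁅R⁆ L') {H Z : L} {μ : R} (hZ : Z ∈ eigenspace (ad R L H) μ) :
    φ Z ∈ eigenspace (ad R L' (φ H)) μ := by
  rw [mem_eigenspace_ad_iff] at hZ ⊢
  rw [← φ.map_lie, hZ]
  exact map_smul φ μ Z

lemma killingForm_apply_of_involutive (θ : L →ₗ⁅R⁆ L) (hθ : Function.Involutive θ) (x y : L) :
    killingForm R L (θ x) (θ y) = killingForm R L x y :=
  killingForm_of_equiv_apply { θ with invFun := θ, left_inv := hθ, right_inv := hθ } x y

lemma killingForm_lie_eq_zero_of_forall_eigenspace {H Y : L}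
    (hspan : ⨆ μ : R, eigenspace (ad R L H) μ = ⊤)
    (hY : ∀ μ ≠ 0, ∀ Z ∈ eigenspace (ad R L H) μ, killingForm R L Z Y = 0) (Z : L) :
    killingForm R L Z ⁅H, Y⁆ = 0 := by
  have hZ : Z ∈ ⨆ μ : R, eigenspace (ad R L H) μ := hspan ▸ Submodule.mem_top
  induction hZ using Submodule.iSup_induction' with
  | mem μ Z hZ =>
    rw [← neg_eq_zero, ← LieModule.traceForm_apply_lie_apply', mem_eigenspace_ad_iff.1 hZ,
      map_smul, LinearMap.smul_apply]
    rcases eq_or_ne μ 0 with rfl | hμ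
    · exact zero_smul R _
    · rw [hY μ hμ Z hZ, smul_zero]
  | zero => simp
  | add Z₁ Z₂ _ _ h₁ h₂ => rw [map_add, LinearMap.add_apply, h₁, h₂, add_zero]

end LieAlgebra

theorem lie_eq_zero_of_fixed_orthogonal_nH_general
    {𝔤 : Type*} [LieRing 𝔤] [LieAlgebra ℝ 𝔤]
    (hnd : (killingForm ℝ 𝔤).Nondegenerate)
    (θ : 𝔤 →ₗ⁅ℝ⁆ 𝔤) (hinv : ∀ Z : 𝔤, θ (θ Z) = Z)
    (H : 𝔤)
    (hhyp : (⨆ lam : ℝ, Module.End.eigenspace (LieAlgebra.ad ℝ 𝔤 H) lam) = ⊤)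
    (hH : θ H = -H) (Y : 𝔤) (hY : θ Y = Y)
    (horth : ∀ X ∈ ⨆ lam > (0 : ℝ), Module.End.eigenspace (LieAlgebra.ad ℝ 𝔤 H) lam,
      killingForm ℝ 𝔤 X Y = 0) :
    ⁅H, Y⁆ = 0 := by
  have horth_pos : ∀ μ > (0 : ℝ), ∀ Z ∈ eigenspace (ad ℝ 𝔤 H) μ, killingForm ℝ 𝔤 Z Y = 0 :=
    fun μ hμ Z hZ ↦ horth Z (Submodule.mem_iSup_of_mem μ (Submodule.mem_iSup_of_mem hμ hZ))
  refine hnd.2 _ (killingForm_lie_eq_zero_of_forall_eigenspace hhyp fun μ hμ Z hZ ↦ ?_)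
  rcases hμ.lt_or_gt with hneg | hpos
  · have hθZ : θ Z ∈ eigenspace (ad ℝ 𝔤 H) (-μ) :=
      mem_eigenspace_ad_neg_iff.1 (hH ▸ θ.map_mem_eigenspace_ad_s12 hZ)
    rw [← killingForm_apply_of_involutive θ hinv, hY]
    exact horth_pos (-μ) (neg_pos.2 hneg) _ hθZ
  · exact horth_pos μ hpos Z hZ

/-- Let `𝔤` have nondegenerate Killing form, let `θ` be an involutive Lie
algebra automorphism, and let `H` be real hyperbolic with `θ H = -H`. If a
`θ`-fixed vector `Y` is Killing-orthogonal to all of `𝔫(H)`, the sum of the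
positive eigenspaces of `ad H`, then `⁅H, Y⁆ = 0`. -/
theorem lie_eq_zero_of_fixed_orthogonal_nH
    {𝔤 : Type*} [LieRing 𝔤] [LieAlgebra ℝ 𝔤] [FiniteDimensional ℝ 𝔤]
    (hnd : (killingForm ℝ 𝔤).Nondegenerate)
    (θ : 𝔤 →ₗ⁅ℝ⁆ 𝔤) (hinv : ∀ Z : 𝔤, θ (θ Z) = Z)
    (H : 𝔤)
    (hhyp : (⨆ lam : ℝ, Module.End.eigenspace (LieAlgebra.ad ℝ 𝔤 H) lam) = ⊤)
    (hH : θ H = -H) (Y : 𝔤) (hY : θ Y = Y)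
    (horth : ∀ X ∈ ⨆ lam > (0 : ℝ), Module.End.eigenspace (LieAlgebra.ad ℝ 𝔤 H) lam,
      killingForm ℝ 𝔤 X Y = 0) :
    ⁅H, Y⁆ = 0 :=
  lie_eq_zero_of_fixed_orthogonal_nH_general hnd θ hinv H hhyp hH Y hY horth
end
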